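/- Let V be a finite-dimensional real vector space with a nondegenerate symmetric bilinear form B, let Λ be a self-dual integral lattice in V, let V = V₁ ⊕ V₂ be an orthogonal direct-sum decomposition, and set Λᵢ = Λ ∩ Vᵢ; assume each Λᵢ spans Vᵢ over ℝ. Then the index of the subgroup Λ₁ + Λ₂ in Λ equals the order of the discriminant group Λ₁*/Λ₁ (equivalently, of Λ₂*/Λ₂); in particular this index is finite. -/

import Mathlib

/-!
Let `p` be the projection onto `V₁` along `V₂`. A vector `l ∈ Λ` lies in `Λ₁ + Λ₂` exactly when
`p l ∈ Λ`, so the index of `Λ₁ + Λ₂` in `Λ` is the index of `Λ₁` in `p(Λ)`. Since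
`B(x, p l) = B(x, l)` for `x ∈ V₁`, self-duality of `Λ` gives `p(Λ)* = Λ₁` in `V₁`. Now
`Λ₁ ⊆ p(Λ) ⊆ Λ₁*` and `Λ₁*` is discrete, so `p(Λ)` is a full lattice in `V₁` and
`p(Λ) = p(Λ)** = Λ₁*`. Finally `Λ₁ ⊆ Λ₁*` are full lattices of the same rank, so the quotient
is finite.
-/

/-- The dual lattice of a lattice `L` inside a subspace `W` of `V`, with respect to the
bilinear form `B`: the set of vectors of `W` pairing integrally with every element of `L`. -/
def dualLattice {V : Type*} [AddCommGroup V] [Module ℝ V]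
    (B : V →ₗ[ℝ] V →ₗ[ℝ] ℝ) (W : Submodule ℝ V) (L : AddSubgroup V) : AddSubgroup V where
  carrier := {v | v ∈ W ∧ ∀ l ∈ L, ∃ n : ℤ, B v l = (n : ℝ)}
  zero_mem' := ⟨W.zero_mem, fun l _ => ⟨0, by simp⟩⟩
  add_mem' := by
    rintro a b ⟨haW, ha⟩ ⟨hbW, hb⟩
    refine ⟨W.add_mem haW hbW, fun l hl => ?_⟩
    obtain ⟨m, hm⟩ := ha l hl
    obtain ⟨n, hn⟩ := hb l hl
    exact ⟨m + n, by simp [map_add, hm, hn]⟩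
  neg_mem' := by
    rintro a ⟨haW, ha⟩
    refine ⟨W.neg_mem haW, fun l hl => ?_⟩
    obtain ⟨m, hm⟩ := ha l hl
    exact ⟨-m, by simp [map_neg, hm]⟩

open Module Submodule
open LinearMap (BilinForm)

theorem Submodule.mem_one_int_iff {x : ℝ} : x ∈ (1 : Submodule ℤ ℝ) ↔ ∃ n : ℤ, x = n := by
  simp [Submodule.mem_one, eq_comm]

namespace AddSubgroup

variable {V : Type*} [AddCommGroup V] [Module ℝ V] (Λ : AddSubgroup V)

def restrictTo (W : Submodule ℝ V) : Submodule ℤ W :=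
  Λ.toIntSubmodule.comap (W.subtype.restrictScalars ℤ)

noncomputable def projectTo {W W' : Submodule ℝ V} (h : IsCompl W W') : Submodule ℤ W :=
  Λ.toIntSubmodule.map ((W.projectionOnto W' h).restrictScalars ℤ)

variable {Λ} {W W' : Submodule ℝ V}

@[simp]
theorem mem_restrictTo {x : W} : x ∈ Λ.restrictTo W ↔ (x : V) ∈ Λ := Iff.rfl

@[simp]
theorem mem_projectTo {h : IsCompl W W'} {x : W} :
    x ∈ Λ.projectTo h ↔ ∃ l ∈ Λ, W.projectionOnto W' h l = x := Iff.rfl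

theorem restrictTo_le_projectTo (h : IsCompl W W') : Λ.restrictTo W ≤ Λ.projectTo h :=
  fun x hx => ⟨x, hx, projectionOnto_apply_left h x⟩

theorem span_restrictTo_eq_top
    (hspan : span ℝ ((Λ ⊓ W.toAddSubgroup : AddSubgroup V) : Set V) = W) :
    span ℝ (Λ.restrictTo W : Set W) = ⊤ := by
  apply map_injective_of_injective W.injective_subtype
  rw [map_span, Submodule.map_top, Submodule.range_subtype]
  convert hspan using 2
  ext v
  exact ⟨fun ⟨x, hx, hxv⟩ => hxv ▸ ⟨hx, x.2⟩, fun ⟨hv, hvW⟩ => ⟨⟨v, hvW⟩, hv, rfl⟩⟩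

theorem inf_eq_map_restrictTo :
    Λ ⊓ W.toAddSubgroup = (Λ.restrictTo W).toAddSubgroup.map W.subtype.toAddMonoidHom := by
  ext v
  exact ⟨fun ⟨hv, hvW⟩ => ⟨⟨v, hvW⟩, hv, rfl⟩, fun ⟨x, hx, hxv⟩ => hxv ▸ ⟨hx, x.2⟩⟩

theorem mem_sup_inf_iff (h : IsCompl W W') {l : V} (hl : l ∈ Λ) :
    l ∈ (Λ ⊓ W.toAddSubgroup) ⊔ (Λ ⊓ W'.toAddSubgroup) ↔ W.projection W' h l ∈ Λ := by
  constructor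
  · intro hsup
    obtain ⟨a, ⟨haΛ, haW⟩, b, ⟨-, hbW'⟩, rfl⟩ := mem_sup.mp hsup
    rwa [map_add, projection_apply_of_mem_left h haW, projection_apply_of_mem_right h hbW',
      add_zero]
  · intro hpl
    refine mem_sup.mpr ⟨_, ⟨hpl, projection_apply_mem h l⟩, _,
      ⟨Λ.sub_mem hl hpl, sub_projection_mem h l⟩, add_sub_cancel _ _⟩

theorem relIndex_sup_inf_eq (h : IsCompl W W') :
    ((Λ ⊓ W.toAddSubgroup) ⊔ (Λ ⊓ W'.toAddSubgroup)).relIndex Λ =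
      (Λ.restrictTo W).toAddSubgroup.relIndex (Λ.projectTo h).toAddSubgroup := by
  let f : V →+ W := (W.projectionOnto W' h).toAddMonoidHom
  calc ((Λ ⊓ W.toAddSubgroup) ⊔ (Λ ⊓ W'.toAddSubgroup)).relIndex Λ
      = ((Λ.restrictTo W).toAddSubgroup.comap f ⊓ Λ).relIndex Λ := by
        rw [← inf_relIndex_right]
        congr 1
        ext l
        simp only [mem_inf]
        exact ⟨fun ⟨hsup, hl⟩ => ⟨(mem_sup_inf_iff h hl).mp hsup, hl⟩,
          fun ⟨hpl, hl⟩ => ⟨(mem_sup_inf_iff h hl).mpr hpl, hl⟩⟩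
    _ = (Λ.restrictTo W).toAddSubgroup.relIndex (Λ.projectTo h).toAddSubgroup := by
        rw [inf_relIndex_right, relIndex_comap]
        rfl

end AddSubgroup

namespace LinearMap.BilinForm

theorem le_dualSubmodule_dualSubmodule {R S M : Type*} [CommRing R] [Field S] [AddCommGroup M]
    [Algebra R S] [Module R M] [Module S M] [IsScalarTower R S M] {B : BilinForm S M}
    (hB' : B.IsSymm) (P : Submodule R M) : P ≤ B.dualSubmodule (B.dualSubmodule P) := by
  intro x hx y hy
  rw [hB'.eq]
  exact hy x hx

section ZLattice

variable {E : Type*} [NormedAddCommGroup E] [NormedSpace ℝ E] [FiniteDimensional ℝ E]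
  {B : BilinForm ℝ E}

theorem discreteTopology_dualSubmodule (hB : B.Nondegenerate) {N : Submodule ℤ E}
    (hN : span ℝ (N : Set E) = ⊤) : DiscreteTopology (B.dualSubmodule N) := by
  classical
  let b := Basis.ofSpan hN.ge
  have := Module.Finite.finite_basis b
  have hle : B.dualSubmodule N ≤ span ℤ (Set.range (B.dualBasis hB b)) := by
    rw [← dualSubmodule_span_of_basis B hB b]
    exact fun x hx y hy => hx y (span_le.mpr (Basis.ofSpan_subset hN.ge) hy)
  exact DiscreteTopology.of_subset
    (inferInstance : DiscreteTopology (span ℤ (Set.range (B.dualBasis hB b)))) hle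

theorem dualSubmodule_dualSubmodule_of_isZLattice (hB : B.Nondegenerate) (hB' : B.IsSymm)
    (P : Submodule ℤ E) [DiscreteTopology P] [IsZLattice ℝ P] :
    B.dualSubmodule (B.dualSubmodule P) = P := by
  have := ZLattice.module_finite ℝ P
  have := ZLattice.module_free ℝ P
  rw [← (Free.chooseBasis ℤ P).ofZLatticeBasis_span ℝ]
  exact dualSubmodule_dualSubmodule_of_basis B hB hB' _

theorem relIndex_dualSubmodule_ne_zero (hB : B.Nondegenerate) {N : Submodule ℤ E}
    (hN : span ℝ (N : Set E) = ⊤) (hint : N ≤ B.dualSubmodule N) :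
    N.toAddSubgroup.relIndex (B.dualSubmodule N).toAddSubgroup ≠ 0 := by
  have hdisc := discreteTopology_dualSubmodule hB hN
  have : DiscreteTopology N := DiscreteTopology.of_subset hdisc hint
  have : IsZLattice ℝ N := ⟨hN⟩
  have : IsZLattice ℝ (B.dualSubmodule N) := ⟨eq_top_mono (span_mono hint) hN⟩
  have := ZLattice.module_finite ℝ (B.dualSubmodule N)
  have := ZLattice.module_free ℝ (B.dualSubmodule N)
  have hfin : Finite (B.dualSubmodule N ⧸ N.comap (B.dualSubmodule N).subtype) := by
    rw [finiteQuotient_iff, (comapSubtypeEquivOfLe hint).finrank_eq, ZLattice.rank ℝ N,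
      ZLattice.rank ℝ (B.dualSubmodule N)]
  exact AddSubgroup.index_ne_zero_of_finite (hH := hfin)

theorem dualSubmodule_eq_of_dualSubmodule_eq (hB : B.Nondegenerate) (hB' : B.IsSymm)
    {N P : Submodule ℤ E} (hN : span ℝ (N : Set E) = ⊤) (hNP : N ≤ P)
    (hPN : B.dualSubmodule P = N) : B.dualSubmodule N = P := by
  have hP : P ≤ B.dualSubmodule N := hPN ▸ le_dualSubmodule_dualSubmodule (B := B) hB' P
  have : DiscreteTopology P := DiscreteTopology.of_subset (discreteTopology_dualSubmodule hB hN) hP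
  have : IsZLattice ℝ P := ⟨eq_top_mono (span_mono hNP) hN⟩
  rw [← hPN, dualSubmodule_dualSubmodule_of_isZLattice hB hB']

end ZLattice

section Restrict

variable {R M : Type*} [CommRing R] [AddCommGroup M] [Module R M] {B : BilinForm R M}
  {W W' : Submodule R M}

theorem nondegenerate_restrict_of_isCompl (hB : B.SeparatingLeft) (hB' : B.IsSymm)
    (h : IsCompl W W') (horth : ∀ w ∈ W, ∀ w' ∈ W', B w w' = 0) :
    (B.restrict W).Nondegenerate := by
  refine B.nondegenerate_restrict_of_disjoint_orthogonal hB'.isRefl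
    (disjoint_def.mpr fun x hxW hx => hB x fun y => ?_)
  rw [← projection_add_projection_eq_self h y, map_add, hB'.eq,
    horth x hxW _ (projection_apply_mem h.symm y), add_zero]
  exact hx _ (projection_apply_mem h y)

theorem restrict_apply_projectionOnto (h : IsCompl W W')
    (horth : ∀ w ∈ W, ∀ w' ∈ W', B w w' = 0) (x : W) (v : M) :
    B.restrict W x (W.projectionOnto W' h v) = B x v := by
  conv_rhs => rw [← projection_add_projection_eq_self h v]
  rw [map_add, horth x x.2 _ (projection_apply_mem h.symm v), add_zero]
  rfl

end Restrict

section SelfDual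

variable {V : Type*} [AddCommGroup V] [Module ℝ V] {B : BilinForm ℝ V} {Λ : AddSubgroup V}
  {W W' : Submodule ℝ V}

theorem dualSubmodule_projectTo (hself : ∀ v, v ∈ Λ ↔ ∀ l ∈ Λ, ∃ n : ℤ, B v l = n)
    (h : IsCompl W W') (horth : ∀ w ∈ W, ∀ w' ∈ W', B w w' = 0) :
    (B.restrict W).dualSubmodule (Λ.projectTo h) = Λ.restrictTo W := by
  ext x
  simp only [mem_dualSubmodule, AddSubgroup.mem_projectTo, AddSubgroup.mem_restrictTo,
    hself (x : V), forall_exists_index, and_imp, forall_apply_eq_imp_iff₂,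
    restrict_apply_projectionOnto h horth, mem_one_int_iff]

theorem dualLattice_inf_eq_map (L : AddSubgroup V) :
    dualLattice B W (L ⊓ W.toAddSubgroup) =
      ((B.restrict W).dualSubmodule (L.restrictTo W)).toAddSubgroup.map
        W.subtype.toAddMonoidHom := by
  ext v
  simp only [AddSubgroup.mem_map, Submodule.mem_toAddSubgroup, mem_dualSubmodule,
    AddSubgroup.mem_restrictTo, mem_one_int_iff, restrict_apply]
  constructor
  · rintro ⟨hvW, hv⟩
    exact ⟨⟨v, hvW⟩, fun y hy => hv y ⟨hy, y.2⟩, rfl⟩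
  · rintro ⟨x, hx, rfl⟩
    exact ⟨x.2, fun l ⟨hl, hlW⟩ => hx ⟨l, hlW⟩ hl⟩

theorem relIndex_inf_dualLattice (L : AddSubgroup V) :
    (L ⊓ W.toAddSubgroup).relIndex (dualLattice B W (L ⊓ W.toAddSubgroup)) =
      (L.restrictTo W).toAddSubgroup.relIndex
        ((B.restrict W).dualSubmodule (L.restrictTo W)).toAddSubgroup := by
  rw [dualLattice_inf_eq_map, AddSubgroup.inf_eq_map_restrictTo,
    AddSubgroup.relIndex_map_map_of_injective _ _ W.injective_subtype]

end SelfDual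

section SelfDualLattice

variable {V : Type*} [NormedAddCommGroup V] [NormedSpace ℝ V] [FiniteDimensional ℝ V]
  {B : BilinForm ℝ V} {Λ : AddSubgroup V} {W W' : Submodule ℝ V}

theorem dualSubmodule_restrictTo (hB : B.SeparatingLeft) (hB' : B.IsSymm)
    (hself : ∀ v, v ∈ Λ ↔ ∀ l ∈ Λ, ∃ n : ℤ, B v l = n)
    (h : IsCompl W W') (horth : ∀ w ∈ W, ∀ w' ∈ W', B w w' = 0)
    (hspan : span ℝ ((Λ ⊓ W.toAddSubgroup : AddSubgroup V) : Set V) = W) :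
    (B.restrict W).dualSubmodule (Λ.restrictTo W) = Λ.projectTo h :=
  dualSubmodule_eq_of_dualSubmodule_eq (nondegenerate_restrict_of_isCompl hB hB' h horth)
    (hB'.restrict W) (AddSubgroup.span_restrictTo_eq_top hspan)
    (AddSubgroup.restrictTo_le_projectTo h) (dualSubmodule_projectTo hself h horth)

theorem relIndex_sup_inf_eq_relIndex_dualLattice (hB : B.SeparatingLeft) (hB' : B.IsSymm)
    (hself : ∀ v, v ∈ Λ ↔ ∀ l ∈ Λ, ∃ n : ℤ, B v l = n)
    (h : IsCompl W W') (horth : ∀ w ∈ W, ∀ w' ∈ W', B w w' = 0)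
    (hspan : span ℝ ((Λ ⊓ W.toAddSubgroup : AddSubgroup V) : Set V) = W) :
    ((Λ ⊓ W.toAddSubgroup) ⊔ (Λ ⊓ W'.toAddSubgroup)).relIndex Λ =
      (Λ ⊓ W.toAddSubgroup).relIndex (dualLattice B W (Λ ⊓ W.toAddSubgroup)) := by
  rw [AddSubgroup.relIndex_sup_inf_eq h, relIndex_inf_dualLattice,
    dualSubmodule_restrictTo hB hB' hself h horth hspan]

theorem relIndex_inf_dualLattice_ne_zero (hB : B.SeparatingLeft) (hB' : B.IsSymm)
    (hself : ∀ v, v ∈ Λ ↔ ∀ l ∈ Λ, ∃ n : ℤ, B v l = n)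
    (h : IsCompl W W') (horth : ∀ w ∈ W, ∀ w' ∈ W', B w w' = 0)
    (hspan : span ℝ ((Λ ⊓ W.toAddSubgroup : AddSubgroup V) : Set V) = W) :
    (Λ ⊓ W.toAddSubgroup).relIndex (dualLattice B W (Λ ⊓ W.toAddSubgroup)) ≠ 0 := by
  have hdual := dualSubmodule_restrictTo hB hB' hself h horth hspan
  rw [relIndex_inf_dualLattice]
  exact relIndex_dualSubmodule_ne_zero (nondegenerate_restrict_of_isCompl hB hB' h horth)
    (AddSubgroup.span_restrictTo_eq_top hspan) (hdual ▸ AddSubgroup.restrictTo_le_projectTo h)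

end SelfDualLattice

end LinearMap.BilinForm

open LinearMap.BilinForm

theorem selfdual_lattice_index_eq_discriminant_order_general
    {V : Type*} [NormedAddCommGroup V] [NormedSpace ℝ V] [FiniteDimensional ℝ V]
    (B : V →ₗ[ℝ] V →ₗ[ℝ] ℝ)
    (hsymm : ∀ x y, B x y = B y x)
    (hnondeg : ∀ x, (∀ y, B x y = 0) → x = 0)
    (Λ : AddSubgroup V)
    (hselfdual : ∀ v : V, v ∈ Λ ↔ ∀ l ∈ Λ, ∃ n : ℤ, B v l = (n : ℝ))
    (V₁ V₂ : Submodule ℝ V)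
    (hcompl : IsCompl V₁ V₂)
    (horth : ∀ v₁ ∈ V₁, ∀ v₂ ∈ V₂, B v₁ v₂ = 0)
    (hspan1 : Submodule.span ℝ ((Λ ⊓ V₁.toAddSubgroup : AddSubgroup V) : Set V) = V₁)
    (hspan2 : Submodule.span ℝ ((Λ ⊓ V₂.toAddSubgroup : AddSubgroup V) : Set V) = V₂) :
    (((Λ ⊓ V₁.toAddSubgroup) ⊔ (Λ ⊓ V₂.toAddSubgroup)).addSubgroupOf Λ).index =
      Nat.card (dualLattice B V₁ (Λ ⊓ V₁.toAddSubgroup) ⧸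
        (Λ ⊓ V₁.toAddSubgroup).addSubgroupOf (dualLattice B V₁ (Λ ⊓ V₁.toAddSubgroup))) ∧
    (((Λ ⊓ V₁.toAddSubgroup) ⊔ (Λ ⊓ V₂.toAddSubgroup)).addSubgroupOf Λ).index =
      Nat.card (dualLattice B V₂ (Λ ⊓ V₂.toAddSubgroup) ⧸
        (Λ ⊓ V₂.toAddSubgroup).addSubgroupOf (dualLattice B V₂ (Λ ⊓ V₂.toAddSubgroup))) ∧
    (((Λ ⊓ V₁.toAddSubgroup) ⊔ (Λ ⊓ V₂.toAddSubgroup)).addSubgroupOf Λ).index ≠ 0 := by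
  have hB' : LinearMap.BilinForm.IsSymm B := ⟨hsymm⟩
  have horth' : ∀ v₂ ∈ V₂, ∀ v₁ ∈ V₁, B v₂ v₁ = 0 :=
    fun v₂ h₂ v₁ h₁ => hsymm v₂ v₁ ▸ horth v₁ h₁ v₂ h₂
  have h₁ := relIndex_sup_inf_eq_relIndex_dualLattice hnondeg hB' hselfdual hcompl horth hspan1
  have h₂ := relIndex_sup_inf_eq_relIndex_dualLattice hnondeg hB' hselfdual
    hcompl.symm horth' hspan2
  rw [sup_comm] at h₂
  exact ⟨h₁, h₂, h₁.trans_ne (relIndex_inf_dualLattice_ne_zero hnondeg hB' hselfdual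
    hcompl horth hspan1)⟩

/-- If `Λ` is a self-dual integral lattice in a finite-dimensional real vector
space `V` with nondegenerate symmetric bilinear form `B`, and `V = V₁ ⊕ V₂` is an orthogonal
decomposition with `Λᵢ = Λ ∩ Vᵢ` spanning `Vᵢ`, then the index of `Λ₁ + Λ₂` in `Λ` equals
the order of the discriminant group `Λ₁*/Λ₁` (equivalently, of `Λ₂*/Λ₂`); in particular
this index is finite (nonzero). -/
theorem selfdual_lattice_index_eq_discriminant_order
    {V : Type*} [NormedAddCommGroup V] [NormedSpace ℝ V] [FiniteDimensional ℝ V]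
    (B : V →ₗ[ℝ] V →ₗ[ℝ] ℝ)
    (hsymm : ∀ x y, B x y = B y x)
    (hnondeg : ∀ x, (∀ y, B x y = 0) → x = 0)
    (Λ : AddSubgroup V)
    (hdisc : DiscreteTopology Λ)
    (hspan : Submodule.span ℝ (Λ : Set V) = ⊤)
    (hint : ∀ x ∈ Λ, ∀ y ∈ Λ, ∃ n : ℤ, B x y = (n : ℝ))
    (hselfdual : ∀ v : V, v ∈ Λ ↔ ∀ l ∈ Λ, ∃ n : ℤ, B v l = (n : ℝ))
    (V₁ V₂ : Submodule ℝ V)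
    (hcompl : IsCompl V₁ V₂)
    (horth : ∀ v₁ ∈ V₁, ∀ v₂ ∈ V₂, B v₁ v₂ = 0)
    (hspan1 : Submodule.span ℝ ((Λ ⊓ V₁.toAddSubgroup : AddSubgroup V) : Set V) = V₁)
    (hspan2 : Submodule.span ℝ ((Λ ⊓ V₂.toAddSubgroup : AddSubgroup V) : Set V) = V₂) :
    (((Λ ⊓ V₁.toAddSubgroup) ⊔ (Λ ⊓ V₂.toAddSubgroup)).addSubgroupOf Λ).index =
      Nat.card (dualLattice B V₁ (Λ ⊓ V₁.toAddSubgroup) ⧸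
        (Λ ⊓ V₁.toAddSubgroup).addSubgroupOf (dualLattice B V₁ (Λ ⊓ V₁.toAddSubgroup))) ∧
    (((Λ ⊓ V₁.toAddSubgroup) ⊔ (Λ ⊓ V₂.toAddSubgroup)).addSubgroupOf Λ).index =
      Nat.card (dualLattice B V₂ (Λ ⊓ V₂.toAddSubgroup) ⧸
        (Λ ⊓ V₂.toAddSubgroup).addSubgroupOf (dualLattice B V₂ (Λ ⊓ V₂.toAddSubgroup))) ∧
    (((Λ ⊓ V₁.toAddSubgroup) ⊔ (Λ ⊓ V₂.toAddSubgroup)).addSubgroupOf Λ).index ≠ 0 :=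
  selfdual_lattice_index_eq_discriminant_order_general B hsymm hnondeg Λ hselfdual V₁ V₂ hcompl
    horth hspan1 hspan2
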